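/- arXiv:2003.01566 — 2 statements merged into one kernel-verified Lean document; each statement's English description precedes it below -/
import Mathlib

section
/- For any T-set $R$ in a normed space $E$, the set $\Gamma_R$ is a convex subset of the unit sphere of $E^*$ which is norm additive. -/
def NormAdditive {E : Type*} [NormedAddCommGroup E] (S : Set E) : Prop :=
  ∀ l : List E, (∀ e ∈ l, e ∈ S) → ‖l.sum‖ = (l.map fun e => ‖e‖).sum

def IsTSet {E : Type*} [NormedAddCommGroup E] (S : Set E) : Prop :=
  NormAdditive S ∧ ∀ R : Set E, NormAdditive R → S ⊆ R → R = S

/-- The set of norm-one functionals norming every element of `R`. -/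
def Gamma {E : Type*} [NormedAddCommGroup E] [NormedSpace ℝ E] (R : Set E) :
    Set (E →L[ℝ] ℝ) := {w | ‖w‖ = 1 ∧ ∀ u ∈ R, w u = ‖u‖}

/-! Every element of `Γ_R` attains its norm at a fixed nonzero `u ∈ R`, so `w ↦ w u / ‖u‖` is a
single additive functional of norm at most one that norms all of `Γ_R`; this forces norm
additivity. Convexity holds because, given such a `u`, `Γ_R` is the intersection of the closed
unit ball with the affine conditions `w u = ‖u‖`. -/

lemma NormAdditive.of_addMonoidHom {F : Type*} [NormedAddCommGroup F] {S : Set F} (φ : F →+ ℝ)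
    (hφ : ∀ x, φ x ≤ ‖x‖) (hφS : ∀ x ∈ S, φ x = ‖x‖) : NormAdditive S := by
  intro l hl
  refine le_antisymm (List.le_sum_of_subadditive norm norm_zero.le norm_add_le l) ?_
  calc (l.map fun e => ‖e‖).sum = (l.map φ).sum :=
        congrArg List.sum (List.map_congr_left fun x hx => (hφS x (hl x hx)).symm)
    _ = φ l.sum := (map_list_sum φ l).symm
    _ ≤ ‖l.sum‖ := hφ _

lemma IsTSet.exists_ne_zero {E : Type*} [NormedAddCommGroup E] {R : Set E} (hR : IsTSet R)
    (hR0 : R ≠ {0}) : ∃ u ∈ R, u ≠ 0 := by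
  by_contra! h
  have h0 : NormAdditive ({0} : Set E) :=
    .of_addMonoidHom 0 (fun x => norm_nonneg x) (fun x hx => by simp [Set.mem_singleton_iff.mp hx])
  exact hR0 (hR.2 {0} h0 h).symm

section Dual

variable {E : Type*} [NormedAddCommGroup E] [NormedSpace ℝ E]

lemma ContinuousLinearMap.apply_div_norm_le_opNorm (w : E →L[ℝ] ℝ) (u : E) :
    w u / ‖u‖ ≤ ‖w‖ :=
  (div_le_div_of_nonneg_right (le_abs_self (w u)) (norm_nonneg u)).trans (w.ratio_le_opNorm u)

lemma ContinuousLinearMap.one_le_opNorm_of_apply_eq_norm {w : E →L[ℝ] ℝ} {u : E} (hu : u ≠ 0)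
    (hwu : w u = ‖u‖) : 1 ≤ ‖w‖ := by
  simpa [hwu, div_self (norm_ne_zero_iff.mpr hu)] using w.apply_div_norm_le_opNorm u

lemma convex_setOf_forall_apply_eq_norm (R : Set E) :
    Convex ℝ {w : E →L[ℝ] ℝ | ∀ u ∈ R, w u = ‖u‖} := by
  simp only [Set.ofPred_forall]
  exact convex_iInter₂ fun u _ =>
    convex_hyperplane (ContinuousLinearMap.apply ℝ ℝ u).isLinear ‖u‖

lemma Gamma_eq_closedBall_inter {R : Set E} {u : E} (huR : u ∈ R) (hu : u ≠ 0) :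
    Gamma R = Metric.closedBall 0 1 ∩ {w | ∀ u ∈ R, w u = ‖u‖} := by
  ext w
  simp only [Gamma, Set.mem_inter_iff, mem_closedBall_zero_iff, Set.mem_ofPred_eq]
  exact ⟨fun hw => ⟨hw.1.le, hw.2⟩, fun hw =>
    ⟨hw.1.antisymm (w.one_le_opNorm_of_apply_eq_norm hu (hw.2 u huR)), hw.2⟩⟩

lemma normAdditive_Gamma {R : Set E} {u : E} (huR : u ∈ R) (hu : u ≠ 0) :
    NormAdditive (Gamma R) :=
  .of_addMonoidHom (AddMonoidHom.mk' (fun w : E →L[ℝ] ℝ => w u / ‖u‖) fun v w => by simp [add_div])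
    (fun w => w.apply_div_norm_le_opNorm u) fun w hw => by
      simp [hw.2 u huR, hw.1, div_self (norm_ne_zero_iff.mpr hu)]

end Dual

theorem gamma_convex_normAdditive {E : Type*} [NormedAddCommGroup E] [NormedSpace ℝ E]
    (R : Set E) (hR : IsTSet R) (hR0 : R ≠ {0}) :
    Convex ℝ (Gamma R) ∧ (∀ w ∈ Gamma R, ‖w‖ = 1) ∧ NormAdditive (Gamma R) := by
  obtain ⟨u, huR, hu⟩ := hR.exists_ne_zero hR0
  refine ⟨?_, fun w hw => hw.1, normAdditive_Gamma huR hu⟩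
  rw [Gamma_eq_closedBall_inter huR hu]
  exact (convex_closedBall 0 1).inter (convex_setOf_forall_apply_eq_norm R)
end

section
/- In a strictly convex normed space $E$, every T-set is of the form $\{t u : t \geq 0\}$ for some nonzero $u \in E$; consequently, any two distinct T-sets $S$ and $R$ in $E$ satisfy $S \cap R = \{0\}$. -/
/-!
In a strictly convex space `‖x + y‖ = ‖x‖ + ‖y‖` forces `x` and `y` onto a common ray. Hence a
norm additive set containing some `u ≠ 0` lies in the ray `{v | SameRay ℝ u v}` of `u`, which is
itself norm additive; by maximality a T-set is the ray of any of its nonzero elements. So two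
T-sets sharing a nonzero element coincide, and every T-set contains `0`.
-/

theorem NormAdditive.norm_add {E : Type*} [NormedAddCommGroup E] {S : Set E}
    (hS : NormAdditive S) {x y : E} (hx : x ∈ S) (hy : y ∈ S) : ‖x + y‖ = ‖x‖ + ‖y‖ := by
  simpa using hS [x, y] (by simp [hx, hy])

section NormedSpace

variable {E : Type*} [NormedAddCommGroup E] [NormedSpace ℝ E]

theorem sameRay_list_sum {u : E} {l : List E} (hl : ∀ e ∈ l, SameRay ℝ u e) :
    SameRay ℝ u l.sum := by
  induction l with
  | nil => exact SameRay.zero_right u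
  | cons e l ih =>
    rw [List.sum_cons]
    exact (hl e List.mem_cons_self).add_right (ih fun x hx => hl x (List.mem_cons_of_mem e hx))

theorem normAdditive_setOf_sameRay {u : E} (hu : u ≠ 0) : NormAdditive {v | SameRay ℝ u v} := by
  intro l hl
  induction l with
  | nil => simp
  | cons e l ih =>
    have hl' : ∀ x ∈ l, SameRay ℝ u x := fun x hx => hl x (List.mem_cons_of_mem e hx)
    have he : SameRay ℝ e l.sum :=
      (hl e List.mem_cons_self).symm.trans (sameRay_list_sum hl') fun h => absurd h hu
    rw [List.sum_cons, List.map_cons, List.sum_cons, he.norm_add, ih hl']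

theorem setOf_sameRay_eq_nonneg_smul {u : E} (hu : u ≠ 0) :
    {v | SameRay ℝ u v} = {v | ∃ t : ℝ, 0 ≤ t ∧ v = t • u} := by
  ext v
  simp only [Set.mem_ofPred_eq, ← exists_nonneg_left_iff_sameRay hu, eq_comm]

theorem IsTSet.exists_ne_zero_s10 [Nontrivial E] {S : Set E} (hS : IsTSet S) : ∃ u ∈ S, u ≠ 0 := by
  by_contra! h
  obtain ⟨u, hu⟩ := exists_ne (0 : E)
  have hsub : S ⊆ {v | SameRay ℝ u v} := fun x hx => by
    rw [Set.mem_ofPred_eq, h x hx]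
    exact SameRay.zero_right u
  exact hu (h u (hS.2 _ (normAdditive_setOf_sameRay hu) hsub ▸ SameRay.rfl))

end NormedSpace

section StrictConvexSpace

variable {E : Type*} [NormedAddCommGroup E] [NormedSpace ℝ E] [StrictConvexSpace ℝ E]

theorem NormAdditive.subset_setOf_sameRay {S : Set E} (hS : NormAdditive S) {u : E}
    (hu : u ∈ S) : S ⊆ {v | SameRay ℝ u v} :=
  fun _ hv => sameRay_iff_norm_add.mpr (hS.norm_add hu hv)

theorem IsTSet.eq_setOf_sameRay {S : Set E} (hS : IsTSet S) {u : E} (huS : u ∈ S)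
    (hu : u ≠ 0) : S = {v | SameRay ℝ u v} :=
  (hS.2 _ (normAdditive_setOf_sameRay hu) (hS.1.subset_setOf_sameRay huS)).symm

theorem IsTSet.zero_mem [Nontrivial E] {S : Set E} (hS : IsTSet S) : (0 : E) ∈ S := by
  obtain ⟨u, huS, hu⟩ := hS.exists_ne_zero_s10
  rw [hS.eq_setOf_sameRay huS hu]
  exact SameRay.zero_right u

theorem IsTSet.inter_eq_zero_of_ne [Nontrivial E] {S R : Set E} (hS : IsTSet S) (hR : IsTSet R)
    (hne : S ≠ R) : S ∩ R = {0} := by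
  refine Set.Subset.antisymm (fun x ⟨hxS, hxR⟩ => ?_) (by simp [hS.zero_mem, hR.zero_mem])
  by_contra hx
  exact hne ((hS.eq_setOf_sameRay hxS hx).trans (hR.eq_setOf_sameRay hxR hx).symm)

end StrictConvexSpace

theorem tset_ray_of_strictConvex {E : Type*} [NormedAddCommGroup E] [NormedSpace ℝ E]
    [Nontrivial E] (hsc : ∀ u v : E, ‖u‖ = 1 → ‖v‖ = 1 → u ≠ v → ‖u + v‖ < 2) :
    (∀ S : Set E, IsTSet S → ∃ u : E, u ≠ 0 ∧ S = {v | ∃ t : ℝ, 0 ≤ t ∧ v = t • u}) ∧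
      (∀ S R : Set E, IsTSet S → IsTSet R → S ≠ R → S ∩ R = {0}) := by
  have : StrictConvexSpace ℝ E :=
    StrictConvexSpace.of_norm_add_ne_two fun u v hu hv huv => (hsc u v hu hv huv).ne
  refine ⟨fun S hS => ?_, fun S R hS hR hne => hS.inter_eq_zero_of_ne hR hne⟩
  obtain ⟨u, huS, hu⟩ := hS.exists_ne_zero_s10
  exact ⟨u, hu, (hS.eq_setOf_sameRay huS hu).trans (setOf_sameRay_eq_nonneg_smul hu)⟩
end
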